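/- Let P be a g-weakly 2-absorbing ideal of a G-graded ring R and (x, y, z) a g-triple-zero of P with x, y, z ∈ R_g. Then P_g y R_e z = {0} and x P_g z = {0}. -/
import Mathlib


variable {G R : Type*} [AddGroup G] [DecidableEq G] [Ring R]

/-- A two-sided ideal is graded if it contains all homogeneous components of its elements. -/
def IsGradedIdeal (𝒜 : G → AddSubgroup R) [GradedRing 𝒜] (P : TwoSidedIdeal R) : Prop :=
  ∀ a ∈ P, ∀ g : G, (DirectSum.decompose 𝒜 a g : R) ∈ P

/-- `P` is a `g`-2-absorbing ideal: `P` is a graded ideal with `P_g ≠ R_g`, and for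
`x, y, z ∈ R_g`, `x R_e y R_e z ⊆ P` implies `xy ∈ P` or `yz ∈ P` or `xz ∈ P`. -/
def IsG2Absorbing (𝒜 : G → AddSubgroup R) [GradedRing 𝒜] (g : G) (P : TwoSidedIdeal R) : Prop :=
  IsGradedIdeal 𝒜 P ∧ (∃ x ∈ 𝒜 g, x ∉ P) ∧
    ∀ x y z : R, x ∈ 𝒜 g → y ∈ 𝒜 g → z ∈ 𝒜 g →
      (∀ r s : R, r ∈ 𝒜 0 → s ∈ 𝒜 0 → x * r * y * s * z ∈ P) →
      x * y ∈ P ∨ y * z ∈ P ∨ x * z ∈ P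

/-- `P` is a `g`-weakly 2-absorbing ideal: `P` is a graded ideal with `P_g ≠ R_g`, and for
`x, y, z ∈ R_g`, `0 ≠ x R_e y R_e z ⊆ P` implies `xy ∈ P` or `yz ∈ P` or `xz ∈ P`. -/
def IsGWeakly2Absorbing (𝒜 : G → AddSubgroup R) [GradedRing 𝒜] (g : G)
    (P : TwoSidedIdeal R) : Prop :=
  IsGradedIdeal 𝒜 P ∧ (∃ x ∈ 𝒜 g, x ∉ P) ∧
    ∀ x y z : R, x ∈ 𝒜 g → y ∈ 𝒜 g → z ∈ 𝒜 g →
      (∃ r s : R, r ∈ 𝒜 0 ∧ s ∈ 𝒜 0 ∧ x * r * y * s * z ≠ 0) →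
      (∀ r s : R, r ∈ 𝒜 0 → s ∈ 𝒜 0 → x * r * y * s * z ∈ P) →
      x * y ∈ P ∨ y * z ∈ P ∨ x * z ∈ P

/-- `(x, y, z)` is a `g`-triple-zero of `P`: `x, y, z ∈ R_g`, `x R_e y R_e z = 0`,
`xy ∉ P`, `yz ∉ P` and `xz ∉ P`. -/
def IsGTripleZero (𝒜 : G → AddSubgroup R) (g : G) (P : TwoSidedIdeal R) (x y z : R) : Prop :=
  x ∈ 𝒜 g ∧ y ∈ 𝒜 g ∧ z ∈ 𝒜 g ∧
    (∀ r s : R, r ∈ 𝒜 0 → s ∈ 𝒜 0 → x * r * y * s * z = 0) ∧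
    x * y ∉ P ∧ y * z ∉ P ∧ x * z ∉ P

/-- Lemmas 4.16(2),(3): if `(x, y, z)` is a `g`-triple-zero of a `g`-weakly 2-absorbing ideal
`P`, then `P_g y R_e z = {0}` and `x P_g z = {0}`. -/
theorem stmt13 (𝒜 : G → AddSubgroup R) [GradedRing 𝒜] (g : G) (P : TwoSidedIdeal R)
    (hP : IsGWeakly2Absorbing 𝒜 g P) (x y z : R) (htz : IsGTripleZero 𝒜 g P x y z) :
    (∀ p ∈ P, p ∈ 𝒜 g → ∀ r : R, r ∈ 𝒜 0 → p * y * r * z = 0) ∧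
    (∀ p ∈ P, p ∈ 𝒜 g → x * p * z = 0) := by
  obtain ⟨hx, hy, hz, h0, hxy, hyz, hxz⟩ := htz
  obtain ⟨-, -, habs⟩ := hP
  have h1 : (1 : R) ∈ 𝒜 (0 : G) := SetLike.one_mem_graded 𝒜
  constructor
  · intro p hpP hpg r hr
    by_contra hne
    have h := habs (x + p) y z (add_mem hx hpg) hy hz
      ⟨1, r, h1, hr, by
        have e : (x + p) * 1 * y * r * z = x * 1 * y * r * z + p * y * r * z := by noncomm_ring
        rw [e, h0 1 r h1 hr, zero_add]; exact hne⟩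
      (fun r' s' hr' hs' => by
        have e : (x + p) * r' * y * s' * z = x * r' * y * s' * z + p * r' * y * s' * z := by
          noncomm_ring
        rw [e, h0 r' s' hr' hs', zero_add]
        exact P.mul_mem_right _ _ (P.mul_mem_right _ _ (P.mul_mem_right _ _
          (P.mul_mem_right _ _ hpP))))
    rcases h with h | h | h
    · rw [add_mul] at h
      exact hxy (by simpa using sub_mem h (P.mul_mem_right p y hpP))
    · exact hyz h
    · rw [add_mul] at h
      exact hxz (by simpa using sub_mem h (P.mul_mem_right p z hpP))
  · intro p hpP hpg
    by_contra hne
    have h := habs x (y + p) z hx (add_mem hy hpg) hz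
      ⟨1, 1, h1, h1, by
        have e : x * 1 * (y + p) * 1 * z = x * 1 * y * 1 * z + x * p * z := by noncomm_ring
        rw [e, h0 1 1 h1 h1, zero_add]; exact hne⟩
      (fun r' s' hr' hs' => by
        have e : x * r' * (y + p) * s' * z = x * r' * y * s' * z + x * r' * p * s' * z := by
          noncomm_ring
        rw [e, h0 r' s' hr' hs', zero_add]
        exact P.mul_mem_right _ _ (P.mul_mem_right _ _ (P.mul_mem_left _ _ hpP)))
    rcases h with h | h | h
    · rw [mul_add] at h
      exact hxy (by simpa using sub_mem h (P.mul_mem_left x p hpP))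
    · rw [add_mul] at h
      exact hyz (by simpa using sub_mem h (P.mul_mem_right p z hpP))
    · exact hxz h
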